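/- Let n ≥ 1, let W ∈ ℝ^{n×n} satisfy W·1_n = 1_n and 1_nᵀ·W = 1_nᵀ, and suppose ‖W − J‖₂ ≤ ρ for some 0 ≤ ρ < 1, where J = (1/n)·1_n·1_nᵀ. Let U, H, H⁺ ∈ ℝ^{q×n} and define the gradient-tracking update U⁺ = U·W + H⁺ − H. Write ū = (1/n)·U·1_n and ū⁺ = (1/n)·U⁺·1_n. Then ‖U⁺ − ū⁺·1_nᵀ‖_F² ≤ ((1+ρ²)/2)·‖U − ū·1_nᵀ‖_F² + ((1+ρ²)/(1−ρ²))·‖H⁺ − H‖_F². -/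

import Mathlib

/-- The Frobenius norm of a real matrix. -/
noncomputable def frobeniusNorm {m n : ℕ} (A : Matrix (Fin m) (Fin n) ℝ) : ℝ :=
  Real.sqrt (∑ i, ∑ j, (A i j) ^ 2)

/-- The spectral norm of a real matrix: the operator norm of the induced linear map between
Euclidean spaces. -/
noncomputable def matSpectralNorm {m n : ℕ} (A : Matrix (Fin m) (Fin n) ℝ) : ℝ :=
  ‖LinearMap.toContinuousLinearMap (Matrix.toEuclideanLin A)‖

/-- The average of the columns of a matrix: `(1/n) • A • 1ₙ`. -/
noncomputable def colAvg {q n : ℕ} (A : Matrix (Fin q) (Fin n) ℝ) : Fin q → ℝ :=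
  (n : ℝ)⁻¹ • A.mulVec (fun _ => 1)

/-- The consensus error of a matrix of stacked iterates: `A - ā·1ₙᵀ`. -/
noncomputable def consensusErr {q n : ℕ} (A : Matrix (Fin q) (Fin n) ℝ) :
    Matrix (Fin q) (Fin n) ℝ :=
  A - Matrix.vecMulVec (colAvg A) (fun _ => 1)


section aux
open scoped Matrix.Norms.L2Operator
open Matrix

lemma spectral_eq_l2 {m n : ℕ} (A : Matrix (Fin m) (Fin n) ℝ) :
    matSpectralNorm A = ‖A‖ := rfl

lemma spectral_transpose {m n : ℕ} (A : Matrix (Fin m) (Fin n) ℝ) :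
    matSpectralNorm Aᵀ = matSpectralNorm A := by
  rw [spectral_eq_l2, spectral_eq_l2, ← Matrix.l2_opNorm_conjTranspose A]
  congr 1


lemma mulVec_norm_le {m n : ℕ} (A : Matrix (Fin m) (Fin n) ℝ) (x : Fin n → ℝ) :
    Real.sqrt (∑ i, (A.mulVec x i)^2) ≤ matSpectralNorm A * Real.sqrt (∑ j, (x j)^2) := by
  have h := (LinearMap.toContinuousLinearMap (Matrix.toEuclideanLin A)).le_opNorm
      ((WithLp.equiv 2 (Fin n → ℝ)).symm x)
  simpa [matSpectralNorm, EuclideanSpace.norm_eq, Real.norm_eq_abs, sq_abs] using h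

lemma fro_nonneg {m n : ℕ} (A : Matrix (Fin m) (Fin n) ℝ) : 0 ≤ frobeniusNorm A :=
  Real.sqrt_nonneg _

lemma fro_sq {m n : ℕ} (A : Matrix (Fin m) (Fin n) ℝ) :
    frobeniusNorm A ^ 2 = ∑ i, ∑ j, (A i j) ^ 2 := by
  rw [frobeniusNorm, Real.sq_sqrt]
  positivity

lemma fro_mul_le {q n m : ℕ} (A : Matrix (Fin q) (Fin n) ℝ) (M : Matrix (Fin n) (Fin m) ℝ) :
    frobeniusNorm (A * M) ≤ matSpectralNorm M * frobeniusNorm A := by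
  have hs : 0 ≤ matSpectralNorm M := norm_nonneg _
  have key : ∀ i, ∑ j, ((A * M) i j) ^ 2 ≤ matSpectralNorm M ^ 2 * ∑ j, (A i j) ^ 2 := by
    intro i
    have hrow : ∀ j, (A * M) i j = Matrix.mulVec Mᵀ (A i) j := by
      intro j
      simp [Matrix.mul_apply, Matrix.mulVec, dotProduct, Matrix.transpose_apply,
        mul_comm]
    have h1 : Real.sqrt (∑ j, (Matrix.mulVec Mᵀ (A i) j) ^ 2)
        ≤ matSpectralNorm Mᵀ * Real.sqrt (∑ j, (A i j) ^ 2) := mulVec_norm_le Mᵀ (A i)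
    rw [spectral_transpose] at h1
    have h2 := mul_self_le_mul_self (Real.sqrt_nonneg _) h1
    rw [Real.mul_self_sqrt (by positivity)] at h2
    calc ∑ j, ((A * M) i j) ^ 2 = ∑ j, (Matrix.mulVec Mᵀ (A i) j) ^ 2 := by
          simp only [hrow]
      _ ≤ (matSpectralNorm M * Real.sqrt (∑ j, (A i j) ^ 2)) *
            (matSpectralNorm M * Real.sqrt (∑ j, (A i j) ^ 2)) := h2
      _ = matSpectralNorm M ^ 2 * ∑ j, (A i j) ^ 2 := by
          rw [mul_mul_mul_comm, Real.mul_self_sqrt (by positivity)]; ring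
  have : ∑ i, ∑ j, ((A * M) i j) ^ 2 ≤ matSpectralNorm M ^ 2 * ∑ i, ∑ j, (A i j) ^ 2 := by
    rw [Finset.mul_sum]
    exact Finset.sum_le_sum fun i _ => key i
  calc frobeniusNorm (A * M) = Real.sqrt (∑ i, ∑ j, ((A * M) i j) ^ 2) := rfl
    _ ≤ Real.sqrt (matSpectralNorm M ^ 2 * ∑ i, ∑ j, (A i j) ^ 2) := Real.sqrt_le_sqrt this
    _ = matSpectralNorm M * frobeniusNorm A := by
        rw [Real.sqrt_mul (by positivity), Real.sqrt_sq hs]; rfl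

lemma fro_consensusErr_le {q n : ℕ} (B : Matrix (Fin q) (Fin n) ℝ) :
    frobeniusNorm (consensusErr B) ≤ frobeniusNorm B := by
  apply Real.sqrt_le_sqrt
  apply Finset.sum_le_sum
  intro i _
  set c := colAvg B i with hc
  have hce : ∀ j, consensusErr B i j = B i j - c := by
    intro j
    simp [consensusErr, Matrix.vecMulVec_apply, hc]
  have hsum : (n : ℝ) * c = ∑ j, B i j := by
    rcases Nat.eq_zero_or_pos n with h0 | hpos
    · subst h0; simp [hc, colAvg, Matrix.mulVec]
    · have : c = (n : ℝ)⁻¹ * ∑ j, B i j := by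
        simp [hc, colAvg, Matrix.mulVec, dotProduct]
      rw [this]
      field_simp
  have expand : ∑ j, (B i j - c) ^ 2
      = (∑ j, (B i j) ^ 2) - 2 * c * (∑ j, B i j) + n * c ^ 2 := by
    have h1 : ∀ j, (B i j - c) ^ 2 = (B i j) ^ 2 - 2 * c * (B i j) + c ^ 2 := fun j => by ring
    simp only [h1, Finset.sum_add_distrib, Finset.sum_sub_distrib, Finset.mul_sum,
      Finset.sum_const, Finset.card_univ, nsmul_eq_mul, Fintype.card_fin]
  calc ∑ j, consensusErr B i j ^ 2 = ∑ j, (B i j - c) ^ 2 := by simp only [hce]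
    _ ≤ ∑ j, (B i j) ^ 2 := by
        rw [expand]
        have h2 : 2 * c * (∑ j, B i j) = 2 * (n:ℝ) * c ^ 2 := by rw [← hsum]; ring
        have h3 : 0 ≤ (n:ℝ) * c ^ 2 :=
          mul_nonneg (Nat.cast_nonneg n) (sq_nonneg c)
        linarith

lemma fro_add_le {q n : ℕ} (A B : Matrix (Fin q) (Fin n) ℝ) :
    frobeniusNorm (A + B) ≤ frobeniusNorm A + frobeniusNorm B := by
  have key : ∀ C : Matrix (Fin q) (Fin n) ℝ,
      frobeniusNorm C = ‖(WithLp.equiv 2 (Fin q × Fin n → ℝ)).symm (fun p => C p.1 p.2)‖ := by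
    intro C
    rw [EuclideanSpace.norm_eq, frobeniusNorm]
    congr 1
    simp [Fintype.sum_prod_type, Real.norm_eq_abs, sq_abs]
  rw [key, key, key]
  have : ((WithLp.equiv 2 (Fin q × Fin n → ℝ)).symm (fun p => (A + B) p.1 p.2))
      = (WithLp.equiv 2 (Fin q × Fin n → ℝ)).symm (fun p => A p.1 p.2)
        + (WithLp.equiv 2 (Fin q × Fin n → ℝ)).symm (fun p => B p.1 p.2) := by
    rfl
  rw [this]
  exact norm_add_le _ _

end aux

theorem tracking_consensus_contraction (n q : ℕ) (hn : 0 < n)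
    (W : Matrix (Fin n) (Fin n) ℝ)
    (hWr : W.mulVec (fun _ => 1) = fun _ => 1)
    (hWc : Matrix.vecMul (fun _ => 1) W = fun _ => 1)
    (ρ : ℝ) (hρ0 : 0 ≤ ρ) (hρ1 : ρ < 1)
    (hWρ : matSpectralNorm (W - Matrix.of fun _ _ => (1 : ℝ) / n) ≤ ρ)
    (U H H' : Matrix (Fin q) (Fin n) ℝ) :
    frobeniusNorm (consensusErr (U * W + H' - H)) ^ 2 ≤
      (1 + ρ ^ 2) / 2 * frobeniusNorm (consensusErr U) ^ 2 +
        (1 + ρ ^ 2) / (1 - ρ ^ 2) * frobeniusNorm (H' - H) ^ 2 := by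
  set Jm : Matrix (Fin n) (Fin n) ℝ := Matrix.of fun _ _ => (1 : ℝ) / n with hJm
  have hn' : (n : ℝ) ≠ 0 := Nat.cast_ne_zero.mpr hn.ne'
  have hWJ : W * Jm = Jm := by
    ext i j
    have h1 := congrFun hWr i
    simp only [Matrix.mulVec, dotProduct, mul_one] at h1
    simp only [hJm, Matrix.mul_apply, Matrix.of_apply]
    rw [← Finset.sum_mul, h1, one_mul]
  have hJW : Jm * W = Jm := by
    ext i j
    have h1 := congrFun hWc j
    simp only [Matrix.vecMul, dotProduct, one_mul] at h1
    simp only [hJm, Matrix.mul_apply, Matrix.of_apply]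
    rw [← Finset.mul_sum, h1, mul_one]
  have hJJ : Jm * Jm = Jm := by
    ext i j
    simp only [hJm, Matrix.mul_apply, Matrix.of_apply, Finset.sum_const,
      Finset.card_univ, Fintype.card_fin, nsmul_eq_mul]
    field_simp
  have hCE : ∀ A : Matrix (Fin q) (Fin n) ℝ, consensusErr A = A - A * Jm := by
    intro A
    ext i j
    simp only [consensusErr, Matrix.sub_apply, Matrix.vecMulVec_apply, colAvg,
      Pi.smul_apply, Matrix.mulVec, dotProduct, mul_one, smul_eq_mul,
      Matrix.mul_apply, hJm, Matrix.of_apply]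
    rw [← Finset.sum_mul]
    congr 1
    rw [mul_comm]
    congr 1
    rw [one_div]
  have hdecomp : consensusErr (U * W + H' - H)
      = consensusErr U * (W - Jm) + consensusErr (H' - H) := by
    rw [hCE, hCE, hCE]
    have e1 : (U - U * Jm) * (W - Jm) = U * W - U * Jm := by
      rw [Matrix.sub_mul, Matrix.mul_sub, Matrix.mul_sub, Matrix.mul_assoc U Jm W, hJW,
        Matrix.mul_assoc U Jm Jm, hJJ]
      abel
    rw [e1]
    have e2 : (U * W + H' - H) * Jm = U * Jm + H' * Jm - H * Jm := by
      rw [Matrix.sub_mul, Matrix.add_mul, Matrix.mul_assoc, hWJ]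
    rw [e2, Matrix.sub_mul]
    abel
  set s := frobeniusNorm (consensusErr U) with hsdef
  set h := frobeniusNorm (H' - H) with hhdef
  have hs : 0 ≤ s := fro_nonneg _
  have hh : 0 ≤ h := fro_nonneg _
  have ha : frobeniusNorm (consensusErr U * (W - Jm)) ≤ ρ * s :=
    le_trans (fro_mul_le _ _) (mul_le_mul_of_nonneg_right hWρ hs)
  have hb : frobeniusNorm (consensusErr (H' - H)) ≤ h := fro_consensusErr_le _
  have hab : frobeniusNorm (consensusErr (U * W + H' - H)) ≤ ρ * s + h := by
    rw [hdecomp]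
    exact le_trans (fro_add_le _ _) (add_le_add ha hb)
  have hsq : frobeniusNorm (consensusErr (U * W + H' - H)) ^ 2 ≤ (ρ * s + h) ^ 2 :=
    pow_le_pow_left₀ (fro_nonneg _) hab 2
  have hρ2 : 0 < 1 - ρ ^ 2 := by nlinarith
  have key : (ρ * s + h) ^ 2 ≤ (1 + ρ ^ 2) / 2 * s ^ 2 + (1 + ρ ^ 2) / (1 - ρ ^ 2) * h ^ 2 := by
    rw [← sub_nonneg]
    have hid : (1 + ρ ^ 2) / 2 * s ^ 2 + (1 + ρ ^ 2) / (1 - ρ ^ 2) * h ^ 2 - (ρ * s + h) ^ 2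
        = ((1 - ρ ^ 2) * s - 2 * ρ * h) ^ 2 / (2 * (1 - ρ ^ 2)) := by
      field_simp
      ring
    rw [hid]
    positivity
  linarith
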